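/- Let A_n be a Poisson random variable with mean nλT, λ, T > 0. Then for K > λT, lim_{n→∞} (1/n)·log P(A_n ≥ nK) = -(K·log(K/(λT)) - K + λT), and for every α > 0 there exists K > λT such that 2α - K·log(K/(λT)) + K - λT < 0. -/

import Mathlib

/-!
Write `I(r, a) = a log (a / r) - a + r`, so that `I(n r, n a) = n I(r, a)`. Chernoff's bound with
`θ = log (K / λT)` and the Poisson moment generating function `exp (m (exp θ - 1))` give
`P(A_n ≥ nK) ≤ exp (-n I(λT, K))` for every `n`. Conversely `P(A_n ≥ nK) ≥ P(A_n = k)` with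
`k = ⌈nK⌉`, and the Stirling bound `log k! ≤ k log k - k + (log k) / 2 + 1` turns this into
`log P(A_n ≥ nK) ≥ -n I(λT, k / n) - O(log n)`; continuity of `I(λT, ·)` at `K` closes the squeeze.
For the second claim, `log (K / λT) ≥ 2` already forces `I(λT, K) ≥ K + λT`.
-/

open MeasureTheory Filter Real ProbabilityTheory Topology
open scoped NNReal Nat

theorem Stirling.log_factorial_le_stirling {n : ℕ} (hn : n ≠ 0) :
    log n ! ≤ n * log n - n + log n / 2 + 1 := by
  obtain ⟨m, rfl⟩ := Nat.exists_eq_succ_of_ne_zero hn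
  have hseq : log (stirlingSeq (m + 1)) ≤ 1 - log 2 / 2 := by
    have h := log_stirlingSeq'_antitone (Nat.zero_le m)
    simp only [Function.comp, Nat.succ_eq_add_one, zero_add, stirlingSeq_one] at h
    rwa [log_div (exp_ne_zero 1) (by positivity), log_exp, log_sqrt zero_le_two] at h
  rw [log_stirlingSeq_formula, log_mul two_ne_zero (by positivity),
    log_div (by positivity) (exp_ne_zero 1), log_exp] at hseq
  linarith

/-- The Cramér rate function of the Poisson law of mean `r`, the Legendre transform of
`θ ↦ r (exp θ - 1)`. -/
noncomputable def poissonRate (r a : ℝ) : ℝ := a * log (a / r) - a + r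

lemma poissonRate_mul {c : ℝ} (hc : c ≠ 0) (r a : ℝ) :
    poissonRate (c * r) (c * a) = c * poissonRate r a := by
  rw [poissonRate, poissonRate, mul_div_mul_left a r hc]
  ring

lemma continuousAt_poissonRate {r a : ℝ} (hr : r ≠ 0) (ha : a ≠ 0) :
    ContinuousAt (poissonRate r) a := by
  unfold poissonRate
  have : ContinuousAt (fun x => log (x / r)) a :=
    (continuous_id.div_const r).continuousAt.log (div_ne_zero ha hr)
  fun_prop

lemma exists_lt_poissonRate {r : ℝ} (hr : 0 < r) (c : ℝ) : ∃ a, r < a ∧ c < poissonRate r a := by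
  refine ⟨r * exp 2 + |c| + 1, ?_, ?_⟩
  · nlinarith [add_one_le_exp (2 : ℝ), abs_nonneg c]
  · have hlog : 2 ≤ log ((r * exp 2 + |c| + 1) / r) := by
      rw [le_log_iff_exp_le (by positivity), le_div_iff₀ hr]
      nlinarith [abs_nonneg c]
    unfold poissonRate
    nlinarith [mul_le_mul_of_nonneg_left hlog (by positivity : (0:ℝ) ≤ r * exp 2 + |c| + 1),
      le_abs_self c, exp_pos 2]

lemma tendsto_log_div_natCast_of_tendsto_div {u : ℕ → ℝ} {c : ℝ}
    (hu : Tendsto (fun n => u n / n) atTop (𝓝 c)) (hc : 0 < c) :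
    Tendsto (fun n => log (u n) / n) atTop (𝓝 0) := by
  have hlog_n : Tendsto (fun n : ℕ => log n / n) atTop (𝓝 0) :=
    isLittleO_log_id_atTop.tendsto_div_nhds_zero.comp tendsto_natCast_atTop_atTop
  have hlog_u := (hu.log hc.ne').div_atTop tendsto_natCast_atTop_atTop
  refine (zero_add (0 : ℝ) ▸ hlog_u.add hlog_n).congr' ?_
  filter_upwards [hu.eventually (lt_mem_nhds hc), eventually_ne_atTop 0] with n hun hn
  have hn' : (0 : ℝ) < n := by positivity
  have hu' : 0 < u n := by simpa [hn'] using hun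
  rw [← add_div, log_div hu'.ne' hn'.ne', sub_add_cancel]

namespace ProbabilityTheory

lemma hasSum_poissonMeasure_mul_exp (r : ℝ≥0) (t : ℝ) :
    HasSum (fun n : ℕ => exp (-r) * r ^ n / n ! * exp (t * n)) (exp (r * (exp t - 1))) := by
  have h := (NormedSpace.expSeries_div_hasSum_exp ((r : ℝ) * exp t)).mul_left (exp (-r))
  rw [← exp_eq_exp_ℝ, ← exp_add] at h
  have hterm : (fun n : ℕ => exp (-r) * r ^ n / n ! * exp (t * n))
      = fun n : ℕ => exp (-r) * ((r * exp t) ^ n / n !) := by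
    ext n
    rw [mul_pow, mul_comm t, exp_nat_mul]
    ring
  rwa [hterm, show (r : ℝ) * (exp t - 1) = -r + r * exp t by ring]

lemma integrable_exp_mul_poissonMeasure (r : ℝ≥0) (t : ℝ) :
    Integrable (fun n : ℕ => exp (t * n)) Po(r) := by
  rw [integrable_poissonMeasure_iff]
  simpa only [norm_eq_abs, abs_exp] using (hasSum_poissonMeasure_mul_exp r t).summable

lemma mgf_poissonMeasure (r : ℝ≥0) (t : ℝ) :
    mgf (fun n : ℕ => (n : ℝ)) Po(r) t = exp (r * (exp t - 1)) := by
  rw [mgf, integral_poissonMeasure]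
  exact (hasSum_poissonMeasure_mul_exp r t).tsum_eq

lemma poissonMeasure_real_ge_le_exp {r : ℝ≥0} (hr : 0 < r) {a : ℝ} (ha : r ≤ a) :
    Po(r).real {n | a ≤ n} ≤ exp (-poissonRate r a) := by
  have ha0 : 0 < a := (NNReal.coe_pos.mpr hr).trans_le ha
  have hθ : 0 ≤ log (a / r) := log_nonneg ((one_le_div (by positivity)).mpr ha)
  calc Po(r).real {n | a ≤ n}
      ≤ exp (-log (a / r) * a) * mgf (fun n : ℕ => (n : ℝ)) Po(r) (log (a / r)) :=
        measure_ge_le_exp_mul_mgf a hθ (integrable_exp_mul_poissonMeasure r _)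
    _ = exp (-poissonRate r a) := by
        rw [mgf_poissonMeasure, exp_log (by positivity), ← exp_add, poissonRate]
        congr 1
        field_simp
        ring

lemma poissonMeasure_real_ge_pos {r : ℝ≥0} (hr : 0 < r) (a : ℝ) :
    0 < Po(r).real {n : ℕ | a ≤ n} :=
  (poissonMeasure_real_singleton_pos ⌈a⌉₊ hr).trans_le
    (measureReal_mono (Set.singleton_subset_iff.mpr (Nat.le_ceil a)))

lemma log_poissonMeasure_real_ge_le {r : ℝ≥0} (hr : 0 < r) {a : ℝ} (ha : r ≤ a) :
    log (Po(r).real {n : ℕ | a ≤ n}) ≤ -poissonRate r a :=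
  (log_le_iff_le_exp (poissonMeasure_real_ge_pos hr a)).mpr (poissonMeasure_real_ge_le_exp hr ha)

lemma le_log_poissonMeasure_real_singleton {r : ℝ≥0} (hr : 0 < r) {k : ℕ} (hk : k ≠ 0) :
    -poissonRate r k - (log k / 2 + 1) ≤ log (Po(r).real {k}) := by
  have hr' : (0 : ℝ) < r := hr
  have hk' : (0 : ℝ) < k := by positivity
  rw [poissonMeasure_real_singleton, log_div (by positivity) (by positivity),
    log_mul (exp_ne_zero _) (by positivity), log_exp, log_pow, poissonRate,
    log_div hk'.ne' hr'.ne']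
  linarith [Stirling.log_factorial_le_stirling hk]

lemma le_log_poissonMeasure_real_ge {r : ℝ≥0} (hr : 0 < r) {a : ℝ} (ha : 0 < a) :
    -poissonRate r ⌈a⌉₊ - (log ⌈a⌉₊ / 2 + 1) ≤ log (Po(r).real {n : ℕ | a ≤ n}) :=
  (le_log_poissonMeasure_real_singleton hr (Nat.ceil_pos.mpr ha).ne').trans <|
    log_le_log (poissonMeasure_real_singleton_pos _ hr)
      (measureReal_mono (Set.singleton_subset_iff.mpr (Nat.le_ceil a)))

lemma map_eq_poissonMeasure {Ω : Type*} [MeasurableSpace Ω] {μ : Measure Ω} {X : Ω → ℕ}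
    (hX : Measurable X) {r : ℝ≥0}
    (h : ∀ k : ℕ, μ {ω | X ω = k} = ENNReal.ofReal (exp (-r) * r ^ k / k !)) :
    μ.map X = Po(r) :=
  Measure.ext_of_singleton fun k => by
    rw [Measure.map_apply hX (measurableSet_singleton k), poissonMeasure_singleton]
    exact h k

theorem tendsto_one_div_mul_log_poissonMeasure_real_ge {r : ℝ≥0} (hr : 0 < r) {K : ℝ} (hK : r < K) :
    Tendsto (fun n : ℕ => (1 / (n : ℝ)) * log (Po(n * r).real {k : ℕ | n * K ≤ k}))
      atTop (𝓝 (-poissonRate r K)) := by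
  have hK0 : 0 < K := (NNReal.coe_pos.mpr hr).trans hK
  set k : ℕ → ℕ := fun n => ⌈n * K⌉₊
  have hk : Tendsto (fun n : ℕ => (k n : ℝ) / n) atTop (𝓝 K) := by
    simpa only [k, mul_comm _ K, Function.comp_def] using
      (tendsto_nat_ceil_mul_div_atTop hK0.le).comp tendsto_natCast_atTop_atTop
  have herr : Tendsto (fun n : ℕ => (log (k n) / 2 + 1) / n) atTop (𝓝 0) := by
    have h := ((tendsto_log_div_natCast_of_tendsto_div hk hK0).div_const 2).add
      tendsto_one_div_atTop_nhds_zero_nat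
    simp only [zero_div, add_zero] at h
    refine h.congr fun n => ?_
    ring
  have hlower := ((continuousAt_poissonRate (NNReal.coe_pos.mpr hr).ne' hK0.ne').tendsto.comp
    hk).neg.sub herr
  rw [sub_zero] at hlower
  refine tendsto_of_tendsto_of_tendsto_of_le_of_le' hlower tendsto_const_nhds ?_ ?_
  all_goals filter_upwards [eventually_gt_atTop 0] with n hn
  all_goals have hn' : (0 : ℝ) < n := by exact_mod_cast hn
  · have h : -poissonRate ((n * r : ℝ≥0) : ℝ) (k n) - (log (k n) / 2 + 1)
        ≤ log (Po(n * r).real {k : ℕ | n * K ≤ k}) :=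
      le_log_poissonMeasure_real_ge (by positivity) (mul_pos hn' hK0)
    have hrate : poissonRate ((n * r : ℝ≥0) : ℝ) (k n) = n * poissonRate r ((k n : ℝ) / n) := by
      rw [← poissonRate_mul hn'.ne', mul_div_cancel₀ _ hn'.ne', NNReal.coe_mul, NNReal.coe_natCast]
    rw [hrate] at h
    rw [Function.comp_apply, one_div, le_inv_mul_iff₀ hn', mul_sub, mul_div_cancel₀ _ hn'.ne']
    linarith
  · have h := log_poissonMeasure_real_ge_le (r := n * r) (a := n * K) (by positivity)
      (by push_cast; gcongr)
    rw [NNReal.coe_mul, NNReal.coe_natCast, poissonRate_mul hn'.ne'] at h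
    rw [one_div, inv_mul_le_iff₀ hn']
    linarith

end ProbabilityTheory

theorem poisson_tail_ldp_rate_general
    {Ω : Type*} [MeasurableSpace Ω] (μ : Measure Ω)
    (lam T : ℝ) (hlam : 0 < lam) (hT : 0 < T)
    (A : ℕ → Ω → ℕ) (hmeas : ∀ n, Measurable (A n))
    (hPois : ∀ n k : ℕ,
      μ {ω | A n ω = k}
        = ENNReal.ofReal (Real.exp (-((n : ℝ) * lam * T)) * ((n : ℝ) * lam * T) ^ k
            / Nat.factorial k)) :
    (∀ K : ℝ, lam * T < K →
      Tendsto
        (fun n : ℕ => (1 / (n : ℝ)) *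
          Real.log ((μ {ω | (n : ℝ) * K ≤ (A n ω : ℝ)}).toReal))
        atTop
        (nhds (-(K * Real.log (K / (lam * T)) - K + lam * T)))) ∧
      ∀ α : ℝ, 0 < α → ∃ K : ℝ, lam * T < K ∧
        2 * α - K * Real.log (K / (lam * T)) + K - lam * T < 0 := by
  have hlt : 0 < lam * T := mul_pos hlam hT
  refine ⟨fun K hK => ?_, fun α _ => ?_⟩
  · set r : ℝ≥0 := ⟨lam * T, hlt.le⟩
    have hr : (r : ℝ) = lam * T := rfl
    have hlaw : ∀ n : ℕ, μ.map (A n) = Po(n * r) := fun n =>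
      map_eq_poissonMeasure (hmeas n) fun k => by
        rw [hPois, NNReal.coe_mul, NNReal.coe_natCast, hr, mul_assoc]
    have htail : ∀ n : ℕ, (μ {ω | (n : ℝ) * K ≤ (A n ω : ℝ)}).toReal
        = Po(n * r).real {k : ℕ | n * K ≤ k} := fun n => by
      rw [measureReal_def, ← hlaw, Measure.map_apply (hmeas n) (.of_discrete)]
      rfl
    simp only [htail, ← hr]
    exact tendsto_one_div_mul_log_poissonMeasure_real_ge (r := r) (NNReal.coe_pos.mp hlt) (hr ▸ hK)
  · obtain ⟨K, hK, hrate⟩ := exists_lt_poissonRate hlt (2 * α)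
    exact ⟨K, hK, by rw [poissonRate] at hrate; linarith⟩

/-- Large-deviation rate of the Poisson upper tail: for `A_n ~ Poisson(nλT)` and `K > λT`,
`(1/n) log P(A_n ≥ nK) → -(K log(K/(λT)) - K + λT)`; moreover for every `α > 0` there is
`K > λT` with `2α - K log(K/(λT)) + K - λT < 0`. -/
theorem poisson_tail_ldp_rate
    {Ω : Type*} [MeasurableSpace Ω] (μ : Measure Ω) [IsProbabilityMeasure μ]
    (lam T : ℝ) (hlam : 0 < lam) (hT : 0 < T)
    (A : ℕ → Ω → ℕ) (hmeas : ∀ n, Measurable (A n))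
    (hPois : ∀ n k : ℕ,
      μ {ω | A n ω = k}
        = ENNReal.ofReal (Real.exp (-((n : ℝ) * lam * T)) * ((n : ℝ) * lam * T) ^ k
            / Nat.factorial k)) :
    (∀ K : ℝ, lam * T < K →
      Tendsto
        (fun n : ℕ => (1 / (n : ℝ)) *
          Real.log ((μ {ω | (n : ℝ) * K ≤ (A n ω : ℝ)}).toReal))
        atTop
        (nhds (-(K * Real.log (K / (lam * T)) - K + lam * T)))) ∧
      ∀ α : ℝ, 0 < α → ∃ K : ℝ, lam * T < K ∧
        2 * α - K * Real.log (K / (lam * T)) + K - lam * T < 0 :=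
  poisson_tail_ldp_rate_general μ lam T hlam hT A hmeas hPois
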